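/- Let s ≥ 1, t ≥ 2 and z ≥ 1 be natural numbers and θ = t·s + z. Define P_CA = {j + s·i : 0 ≤ j ≤ s−1, 0 ≤ i ≤ t−1}, P_CB = {(s−1−k) + θ·l : 0 ≤ k ≤ s−1, 0 ≤ l ≤ t−1}, P_SA = {t·s + u : 0 ≤ u ≤ z−1}, and P_SB = {t·s + θ·(t−1) + r : 0 ≤ r ≤ z−1}. Then the sumset (P_CA ∪ P_SA) + (P_CB ∪ P_SB) has cardinality 2·t·s + θ·(t−1) + 2z − 1, which equals (t+1)·(t·s+z) − 1. -/

import Mathlib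

/-!
The first factor of the sumset is the whole interval `[0, θ)`: the coded exponents `j + s i` are
the base-`s` expansions of `[0, t s)`, and the secret ones continue it up to `θ`. Adding `[0, θ)` to
a set `B ⊆ [0, M]` containing `M` gives `[0, M + θ)` as soon as consecutive elements of `B` are less
than `θ` apart. For the second factor `M = θ t - 1` is its last secret exponent, and its coded
exponents with `k = s - 1` are the multiples `θ l`, `l < t`, which leave no gap of length `θ` below
`M`. Hence the sumset is `[0, θ t - 1 + θ)`.
-/

open Pointwise Set

lemma setOf_add_mul_eq_Iio (s t : ℕ) :
    {n : ℕ | ∃ j i, j < s ∧ i < t ∧ n = j + s * i} = Iio (t * s) := by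
  ext n
  simp only [mem_ofPred_eq, mem_Iio]
  constructor
  · rintro ⟨j, i, hj, hi, rfl⟩
    have : s * i + s ≤ t * s := by
      rw [mul_comm t]; exact Nat.mul_succ s i ▸ Nat.mul_le_mul_left s hi
    omega
  · intro hn
    have hs : 0 < s := Nat.pos_of_mul_pos_left (Nat.zero_lt_of_lt hn)
    exact ⟨n % s, n / s, Nat.mod_lt n hs, Nat.div_lt_of_lt_mul (mul_comm t s ▸ hn),
      (Nat.mod_add_div n s).symm⟩

lemma Iio_union_setOf_add_eq_Iio (a z : ℕ) :
    Iio a ∪ {n : ℕ | ∃ u, u < z ∧ n = a + u} = Iio (a + z) := by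
  ext n
  simp only [mem_union, mem_Iio, mem_ofPred_eq]
  constructor
  · rintro (hn | ⟨u, hu, rfl⟩) <;> omega
  · intro hn
    by_cases h : n < a
    · exact Or.inl h
    · exact Or.inr ⟨n - a, by omega, by omega⟩

lemma Nat.Iio_add_eq_Iio_of_gaps_lt {θ M : ℕ} {B : Set ℕ} (hB : B ⊆ Iic M) (hM : M ∈ B)
    (hgap : ∀ n ≤ M, ∃ b ∈ B, b ≤ n ∧ n < b + θ) :
    Iio θ + B = Iio (M + θ) := by
  ext n
  simp only [mem_add, mem_Iio]
  constructor
  · rintro ⟨x, hx, b, hb, rfl⟩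
    have := hB hb
    rw [mem_Iic] at this
    omega
  · intro hn
    by_cases h : n ≤ M
    · obtain ⟨b, hb, hbn, hnb⟩ := hgap n h
      exact ⟨n - b, by omega, b, hb, by omega⟩
    · exact ⟨n - M, by omega, M, hM, by omega⟩

lemma Iio_add_ageSupportB_eq_Iio (s t z : ℕ) (hs : 1 ≤ s) (ht : 1 ≤ t) (hz : 1 ≤ z) :
    Iio (t * s + z) +
     ({n : ℕ | ∃ k l, k < s ∧ l < t ∧ n = (s - 1 - k) + (t * s + z) * l} ∪
      {n : ℕ | ∃ r, r < z ∧ n = t * s + (t * s + z) * (t - 1) + r})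
      = Iio ((t + 1) * (t * s + z) - 1) := by
  set θ := t * s + z with hθ
  have hθt : t * θ = θ * (t - 1) + θ := by
    rw [mul_comm t, ← Nat.mul_succ, Nat.succ_eq_add_one, Nat.sub_add_cancel ht]
  have hsθ : s ≤ θ := by nlinarith
  rw [show (t + 1) * θ - 1 = θ * (t - 1) + (θ - 1) + θ by rw [add_mul, one_mul, hθt]; omega]
  refine Nat.Iio_add_eq_Iio_of_gaps_lt ?_ (Or.inr ⟨z - 1, by omega, by omega⟩) ?_
  · rintro n (⟨k, l, hk, hl, rfl⟩ | ⟨r, hr, rfl⟩) <;> rw [mem_Iic]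
    · have : θ * l ≤ θ * (t - 1) := Nat.mul_le_mul_left θ (by omega)
      omega
    · omega
  · intro n hn
    have hθ0 : 0 < θ := by omega
    refine ⟨θ * (n / θ), Or.inl ⟨s - 1, n / θ, by omega, ?_, by omega⟩, Nat.mul_div_le n θ, ?_⟩
    · exact (Nat.div_lt_iff_lt_mul hθ0).mpr (by omega)
    · have := Nat.lt_div_mul_add (a := n) hθ0
      rw [mul_comm]; omega

/-- AGE-CMPC worker count for λ = z (θ = t·s + z):
|(P_CA ∪ P_SA) + (P_CB ∪ P_SB)| = 2ts + θ(t−1) + 2z − 1 = (t+1)(ts+z) − 1. -/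
theorem age_workers_lambda_eq_z (s t z : ℕ) (hs : 1 ≤ s) (ht : 2 ≤ t)
    (hz : 1 ≤ z) :
    (({n : ℕ | ∃ j i, j < s ∧ i < t ∧ n = j + s * i} ∪
      {n : ℕ | ∃ u, u < z ∧ n = t * s + u}) +
     ({n : ℕ | ∃ k l, k < s ∧ l < t ∧ n = (s - 1 - k) + (t * s + z) * l} ∪
      {n : ℕ | ∃ r, r < z ∧ n = t * s + (t * s + z) * (t - 1) + r})).ncard
      = 2 * (t * s) + (t * s + z) * (t - 1) + 2 * z - 1 ∧
    2 * (t * s) + (t * s + z) * (t - 1) + 2 * z - 1 = (t + 1) * (t * s + z) - 1 := by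
  rw [setOf_add_mul_eq_Iio, Iio_union_setOf_add_eq_Iio,
    Iio_add_ageSupportB_eq_Iio s t z hs (by omega) hz, ncard_Iio_nat]
  have hexpand : (t + 1) * (t * s + z) = 2 * (t * s) + (t * s + z) * (t - 1) + 2 * z := by
    obtain ⟨t, rfl⟩ : ∃ t', t = t' + 1 := ⟨t - 1, by omega⟩
    simp only [Nat.add_sub_cancel]
    ring
  exact ⟨by omega, by omega⟩
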